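/- arXiv:1801.00606 — 6 statements merged into one kernel-verified Lean document; each statement's English description precedes it below -/
import Mathlib

section
/- Converse computation for Corollary 1 (exact secrecy capacity–memory tradeoff for small weak-receiver caches): Let K_w, K_s be positive integers and δ_s, δ_w, δ_z reals with 0 ≤ δ_s ≤ δ_w ≤ 1 and δ_s < δ_z ≤ 1. Set x := (δ_z − δ_w)⁺, R⁰ := (δ_z − δ_s)·x/(K_w(δ_z − δ_s) + K_s·x), γ := K_w(δ_z − δ_s)/(K_w(δ_z − δ_s) + K_s·x), and M¹ := (δ_z − δ_s)·min{1 − δ_z, 1 − δ_w}/(K_s(1 − δ_w) + K_w(δ_z − δ_s)). Then for every real M with 0 ≤ M ≤ M¹ one has sup_{β ∈ [0,1]} min{ β·x/K_w + M , (β·x + (1 − β)(δ_z − δ_s))/(K_w + K_s) + K_w·M/(K_w + K_s) } = R⁰ + γ·M; moreover when x > 0 the supremum is attained at β* = K_w((δ_z − δ_s) − K_s·M)/(K_w(δ_z − δ_s) + K_s·x), which lies in [0,1] and makes the two terms in the minimum equal. -/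
set_option maxHeartbeats 1600000 in
/-- Converse computation for Corollary 1: exact secrecy capacity–memory tradeoff for
small weak-receiver caches. -/
theorem stmt_0 (Kw Ks : ℕ) (hKw : 0 < Kw) (hKs : 0 < Ks)
    (δs δw δz : ℝ) (hs0 : 0 ≤ δs) (hsw : δs ≤ δw) (hw1 : δw ≤ 1)
    (hsz : δs < δz) (hz1 : δz ≤ 1)
    (x R0 γ M1 : ℝ)
    (hx : x = max (δz - δw) 0)
    (hR0 : R0 = (δz - δs) * x / (Kw * (δz - δs) + Ks * x))
    (hγ : γ = Kw * (δz - δs) / (Kw * (δz - δs) + Ks * x))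
    (hM1 : M1 = (δz - δs) * min (1 - δz) (1 - δw) / (Ks * (1 - δw) + Kw * (δz - δs)))
    (M : ℝ) (hM0 : 0 ≤ M) (hM1' : M ≤ M1) :
    sSup ((fun β : ℝ => min (β * x / Kw + M)
        ((β * x + (1 - β) * (δz - δs)) / (Kw + Ks) + Kw * M / (Kw + Ks))) '' Set.Icc 0 1)
      = R0 + γ * M
    ∧ (0 < x →
        ∀ βstar : ℝ, βstar = Kw * ((δz - δs) - Ks * M) / (Kw * (δz - δs) + Ks * x) →
          βstar ∈ Set.Icc (0 : ℝ) 1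
          ∧ βstar * x / Kw + M
              = (βstar * x + (1 - βstar) * (δz - δs)) / (Kw + Ks) + Kw * M / (Kw + Ks)
          ∧ min (βstar * x / Kw + M)
              ((βstar * x + (1 - βstar) * (δz - δs)) / (Kw + Ks) + Kw * M / (Kw + Ks))
              = R0 + γ * M) := by
  have ha : (0:ℝ) < δz - δs := sub_pos.2 hsz
  have hKw' : (0:ℝ) < Kw := by exact_mod_cast hKw
  have hKs' : (0:ℝ) < Ks := by exact_mod_cast hKs
  have hK : (0:ℝ) < Kw + Ks := by positivity
  have hx0 : 0 ≤ x := by rw [hx]; exact le_max_right _ _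
  have hxa : x ≤ δz - δs := by
    rw [hx]; apply max_le <;> linarith
  have hD : (0:ℝ) < Kw * (δz - δs) + Ks * x := by
    have h1 : (0:ℝ) < Kw * (δz - δs) := by positivity
    nlinarith [mul_nonneg hKs'.le hx0]
  -- key bound : Ks * M ≤ δz - δs
  have hD2 : (0:ℝ) < Ks * (1 - δw) + Kw * (δz - δs) := by
    have h1 : (0:ℝ) ≤ Ks * (1 - δw) := by
      apply mul_nonneg hKs'.le; linarith
    nlinarith [mul_pos hKw' ha]
  have hMa : Ks * M ≤ δz - δs := by
    rw [hM1] at hM1'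
    have h1 : M * (Ks * (1 - δw) + Kw * (δz - δs)) ≤ (δz - δs) * min (1 - δz) (1 - δw) :=
      (le_div_iff₀ hD2).1 hM1'
    have hmin : min (1 - δz) (1 - δw) ≤ 1 - δw := min_le_right _ _
    have h2 : (δz - δs) * min (1 - δz) (1 - δw) ≤ (δz - δs) * (1 - δw) :=
      mul_le_mul_of_nonneg_left hmin ha.le
    -- Ks * M * D2 ≤ Ks * (δz-δs) * (1-δw) ≤ (δz-δs) * D2
    have h3 : Ks * M * (Ks * (1 - δw) + Kw * (δz - δs)) ≤ (δz - δs) * (Ks * (1 - δw) + Kw * (δz - δs)) := by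
      nlinarith [mul_pos hKw' ha, mul_nonneg hKw'.le hM0]
    exact le_of_mul_le_mul_right (by linarith [h3]) hD2
  set B : ℝ := Kw * ((δz - δs) - Ks * M) / (Kw * (δz - δs) + Ks * x) with hB
  have hβ0 : 0 ≤ B := by
    apply div_nonneg _ hD.le
    apply mul_nonneg hKw'.le; linarith
  have hβ1 : B ≤ 1 := by
    rw [hB, div_le_one hD]
    nlinarith [mul_nonneg hKw'.le (mul_nonneg hKs'.le hM0), mul_nonneg hKs'.le hx0]
  have heq : B * x / Kw + M
      = (B * x + (1 - B) * (δz - δs)) / (Kw + Ks) + Kw * M / (Kw + Ks) := by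
    rw [hB]; field_simp; ring
  have hval : B * x / Kw + M = R0 + γ * M := by
    rw [hB, hR0, hγ]; field_simp; ring
  have hfB : min (B * x / Kw + M)
      ((B * x + (1 - B) * (δz - δs)) / (Kw + Ks) + Kw * M / (Kw + Ks)) = R0 + γ * M := by
    rw [min_eq_left heq.le, hval]
  have hub : ∀ β ∈ Set.Icc (0:ℝ) 1,
      min (β * x / Kw + M) ((β * x + (1 - β) * (δz - δs)) / (Kw + Ks) + Kw * M / (Kw + Ks))
        ≤ R0 + γ * M := by
    intro β hβ
    rcases le_total β B with h | h
    · refine le_trans (min_le_left _ _) ?_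
      rw [← hval]
      have h1 : β * x ≤ B * x := mul_le_mul_of_nonneg_right h hx0
      have h2 : β * x / Kw ≤ B * x / Kw := (div_le_div_iff_of_pos_right hKw').2 h1
      linarith
    · refine le_trans (min_le_right _ _) ?_
      rw [← hval, heq]
      have hnum : β * x + (1 - β) * (δz - δs) ≤ B * x + (1 - B) * (δz - δs) := by
        nlinarith [mul_nonneg (sub_nonneg.2 h) (sub_nonneg.2 hxa)]
      gcongr
  have hgreat : IsGreatest ((fun β : ℝ => min (β * x / Kw + M)
      ((β * x + (1 - β) * (δz - δs)) / (Kw + Ks) + Kw * M / (Kw + Ks))) '' Set.Icc 0 1)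
      (R0 + γ * M) := by
    constructor
    · exact ⟨B, ⟨hβ0, hβ1⟩, hfB⟩
    · rintro y ⟨β, hβ, rfl⟩
      exact hub β hβ
  refine ⟨hgreat.csSup_eq, ?_⟩
  intro _ βstar hβstar
  have : βstar = B := hβstar
  subst this
  exact ⟨⟨hβ0, hβ1⟩, heq, hfB⟩
end

section
/- Converse computation for the optimality of the rate-memory triple (R̃¹, M̃_w¹, M̃_s¹) (Corollary after Theorem 4): Let K_w, K_s be positive integers, K = K_w + K_s, and δ_s, δ_w, δ_z reals with 0 ≤ δ_s ≤ δ_w < 1 and 0 ≤ δ_z ≤ 1. Set denom := K_w(1 − δ_s) + K_s(1 − δ_w), R̃¹ := (1 − δ_s)(1 − δ_w)/denom, M̃_w¹ := (1 − δ_s)·min{1 − δ_z, 1 − δ_w}/denom, and M̃_s¹ := (1 − δ_w)·min{1 − δ_z, 1 − δ_s}/denom. Then sup_{β ∈ [0,1]} min{ β(δ_z − δ_w)⁺/K_w + M̃_w¹ , (β(δ_z − δ_w)⁺ + (1 − β)(δ_z − δ_s)⁺)/K + (K_w·M̃_w¹ + K_s·M̃_s¹)/K } = R̃¹. -/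
/-! Since `(δz - δw)⁺ ≤ (δz - δs)⁺`, the first term of the minimum is nondecreasing and the second
nonincreasing in `β`. Hence the supremum of the minimum is attained where the two terms cross, at
`β = K_w (1 - δs) / denom ∈ [0, 1]`, and there both terms equal `R̃¹`. -/

theorem isGreatest_image_min_of_monotoneOn_of_antitoneOn {α β : Type*} [LinearOrder α]
    [LinearOrder β] {s : Set α} {f g : α → β} (hf : MonotoneOn f s) (hg : AntitoneOn g s)
    {x₀ : α} (hx₀ : x₀ ∈ s) (hfg : f x₀ = g x₀) :
    IsGreatest ((fun x => min (f x) (g x)) '' s) (f x₀) := by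
  refine ⟨⟨x₀, hx₀, by simp only [hfg, min_self]⟩, ?_⟩
  rintro _ ⟨x, hx, rfl⟩
  rcases le_total x x₀ with h | h
  · exact (min_le_left _ _).trans (hf hx hx₀ h)
  · exact (min_le_right _ _).trans (hfg ▸ hg hx₀ hx h)

theorem min_sub_sub_left_eq_sub_posPart (a z w : ℝ) :
    min (a - z) (a - w) = a - w - max (z - w) 0 := by
  rcases le_total z w with h | h
  · rw [max_eq_right (by linarith), min_eq_right (by linarith)]; ring
  · rw [max_eq_left (by linarith), min_eq_left (by linarith)]; ring

section Crossing

variable {kw ks δs δw A B d : ℝ}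

theorem weak_term_at_crossing (hkw : kw ≠ 0) (hd : d ≠ 0) :
    kw * (1 - δs) / d * A / kw + (1 - δs) * (1 - δw - A) / d = (1 - δs) * (1 - δw) / d := by
  field_simp
  ring

theorem total_term_at_crossing (hk : kw + ks ≠ 0) (hd : d = kw * (1 - δs) + ks * (1 - δw))
    (hd0 : d ≠ 0) :
    (kw * (1 - δs) / d * A + (1 - kw * (1 - δs) / d) * B) / (kw + ks)
        + (kw * ((1 - δs) * (1 - δw - A) / d) + ks * ((1 - δw) * (1 - δs - B) / d)) / (kw + ks)
      = (1 - δs) * (1 - δw) / d := by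
  have hcompl : 1 - kw * (1 - δs) / d = ks * (1 - δw) / d := by
    field_simp
    linarith
  rw [hcompl]
  field_simp
  ring

end Crossing

theorem stmt_2_general (Kw Ks K : ℕ) (hKw : 0 < Kw) (hK : K = Kw + Ks)
    (δs δw δz : ℝ) (hsw : δs ≤ δw) (hw1 : δw < 1)
    (denom R1 Mw1 Ms1 : ℝ)
    (hdenom : denom = Kw * (1 - δs) + Ks * (1 - δw))
    (hR1 : R1 = (1 - δs) * (1 - δw) / denom)
    (hMw1 : Mw1 = (1 - δs) * min (1 - δz) (1 - δw) / denom)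
    (hMs1 : Ms1 = (1 - δw) * min (1 - δz) (1 - δs) / denom) :
    sSup ((fun β : ℝ => min (β * max (δz - δw) 0 / Kw + Mw1)
        ((β * max (δz - δw) 0 + (1 - β) * max (δz - δs) 0) / K
          + (Kw * Mw1 + Ks * Ms1) / K)) '' Set.Icc 0 1)
      = R1 := by
  subst hR1 hMw1 hMs1 hK
  rw [min_sub_sub_left_eq_sub_posPart, min_sub_sub_left_eq_sub_posPart, Nat.cast_add]
  have hKw' : (0 : ℝ) < Kw := by exact_mod_cast hKw
  have hw : 0 < 1 - δw := by linarith
  have hs : 0 < 1 - δs := by linarith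
  have hdenom_pos : 0 < denom := by rw [hdenom]; positivity
  have hβ₀ : Kw * (1 - δs) / denom ∈ Set.Icc 0 1 :=
    ⟨by positivity, (div_le_one hdenom_pos).mpr (by rw [hdenom]; nlinarith)⟩
  have hweak := weak_term_at_crossing (δs := δs) (δw := δw) (A := max (δz - δw) 0)
    hKw'.ne' hdenom_pos.ne'
  have htotal := total_term_at_crossing (A := max (δz - δw) 0) (B := max (δz - δs) 0)
    (by positivity) hdenom hdenom_pos.ne'
  have hAB : max (δz - δw) 0 ≤ max (δz - δs) 0 := max_le_max (by linarith) le_rfl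
  refine (isGreatest_image_min_of_monotoneOn_of_antitoneOn ?_ ?_ hβ₀
    (hweak.trans htotal.symm)).csSup_eq.trans hweak
  · intro a _ b _ hab
    dsimp only
    gcongr
  · intro a _ b _ hab
    dsimp only
    gcongr ?_ / _ + _
    nlinarith [mul_nonneg (sub_nonneg.2 hab) (sub_nonneg.2 hAB)]

/-- Converse computation for the optimality of the rate-memory triple
(R̃¹, M̃_w¹, M̃_s¹): the paper's upper bound (19) with k_w = K_w, k_s = K_s evaluated at
cache sizes (M̃_w¹, M̃_s¹) equals R̃¹. -/
theorem stmt_2 (Kw Ks K : ℕ) (hKw : 0 < Kw) (hKs : 0 < Ks) (hK : K = Kw + Ks)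
    (δs δw δz : ℝ) (hs0 : 0 ≤ δs) (hsw : δs ≤ δw) (hw1 : δw < 1)
    (hz0 : 0 ≤ δz) (hz1 : δz ≤ 1)
    (denom R1 Mw1 Ms1 : ℝ)
    (hdenom : denom = Kw * (1 - δs) + Ks * (1 - δw))
    (hR1 : R1 = (1 - δs) * (1 - δw) / denom)
    (hMw1 : Mw1 = (1 - δs) * min (1 - δz) (1 - δw) / denom)
    (hMs1 : Ms1 = (1 - δw) * min (1 - δz) (1 - δs) / denom) :
    sSup ((fun β : ℝ => min (β * max (δz - δw) 0 / Kw + Mw1)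
        ((β * max (δz - δw) 0 + (1 - β) * max (δz - δs) 0) / K
          + (Kw * Mw1 + Ks * Ms1) / K)) '' Set.Icc 0 1)
      = R1 :=
  stmt_2_general Kw Ks K hKw hK δs δw δz hsw hw1 denom R1 Mw1 Ms1 hdenom hR1 hMw1 hMs1
end

section
/- Converse computation for the global secrecy capacity–memory tradeoff with small total cache budget when δ_z > δ_s (Proposition, eq. (60)): Let K_w, K_s be positive integers, K = K_w + K_s, and δ_s, δ_w, δ_z reals with 0 ≤ δ_s ≤ δ_w ≤ 1 and δ_s < δ_z ≤ 1. Set x := (δ_z − δ_w)⁺, R⁰ := (δ_z − δ_s)·x/(K_w(δ_z − δ_s) + K_s·x), and M¹ := (δ_z − δ_s)·min{1 − δ_z, 1 − δ_w}/(K_s(1 − δ_w) + K_w(δ_z − δ_s)). Then for every real M with 0 ≤ M ≤ K_w·M¹ one has sup_{β ∈ [0,1]} min{ (β·x + M)/K_w , (β·x + (1 − β)(δ_z − δ_s) + M)/K } = R⁰ + (δ_z − δ_s)·M/(K_w(δ_z − δ_s) + K_s·x). -/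
/-! The first term of the minimum is nondecreasing in `β` and the second nonincreasing
(because `(δz - δw)⁺ ≤ δz - δs`), so the supremum of their minimum is attained where the two
lines cross, `β* = (Kw (δz - δs) - Ks M) / (Kw (δz - δs) + Ks x)`. The bound on the cache budget
`M ≤ Kw M¹` gives `β* ≥ 0`, and `M ≥ 0` gives `β* ≤ 1`. -/

theorem MonotoneOn.isGreatest_image_min {α β : Type*} [LinearOrder α] [LinearOrder β]
    {f g : α → β} {s : Set α} (hf : MonotoneOn f s) (hg : AntitoneOn g s)
    {b : α} (hb : b ∈ s) (hfg : f b = g b) :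
    IsGreatest ((fun t => min (f t) (g t)) '' s) (f b) := by
  refine ⟨⟨b, hb, by simp [hfg]⟩, ?_⟩
  rintro _ ⟨t, ht, rfl⟩
  rcases le_total t b with htb | hbt
  · exact (min_le_left _ _).trans (hf ht hb htb)
  · exact (min_le_right _ _).trans (hfg ▸ hg hb ht hbt)

theorem mul_le_of_le_mul_div_add {Kw Ks a w m M : ℝ} (hKw : 0 < Kw) (hKs : 0 ≤ Ks)
    (ha : 0 < a) (hw : 0 ≤ w) (hmw : m ≤ w) (hM : M ≤ Kw * (a * m / (Ks * w + Kw * a))) :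
    Ks * M ≤ Kw * a := by
  have hD : 0 < Ks * w + Kw * a := by positivity
  have hfrac : Ks * (a * m / (Ks * w + Kw * a)) ≤ a := by
    rw [← mul_div_assoc, div_le_iff₀ hD]
    nlinarith [mul_le_mul_of_nonneg_left (mul_le_mul_of_nonneg_left hmw hKs) ha.le,
      mul_pos (mul_pos hKw ha) ha]
  calc Ks * M ≤ Ks * (Kw * (a * m / (Ks * w + Kw * a))) := mul_le_mul_of_nonneg_left hM hKs
    _ = Kw * (Ks * (a * m / (Ks * w + Kw * a))) := by ring
    _ ≤ Kw * a := mul_le_mul_of_nonneg_left hfrac hKw.le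

theorem stmt_3_general (Kw Ks K : ℕ) (hKw : 0 < Kw) (hK : K = Kw + Ks)
    (δs δw δz : ℝ) (hsw : δs ≤ δw) (hw1 : δw ≤ 1)
    (hsz : δs < δz)
    (x R0 M1 : ℝ)
    (hx : x = max (δz - δw) 0)
    (hR0 : R0 = (δz - δs) * x / (Kw * (δz - δs) + Ks * x))
    (hM1 : M1 = (δz - δs) * min (1 - δz) (1 - δw) / (Ks * (1 - δw) + Kw * (δz - δs)))
    (M : ℝ) (hM0 : 0 ≤ M) (hMle : M ≤ Kw * M1) :
    sSup ((fun β : ℝ => min ((β * x + M) / Kw)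
        ((β * x + (1 - β) * (δz - δs) + M) / K)) '' Set.Icc 0 1)
      = R0 + (δz - δs) * M / (Kw * (δz - δs) + Ks * x) := by
  have hKw' : (0 : ℝ) < Kw := Nat.cast_pos.2 hKw
  set a := δz - δs
  have ha : 0 < a := sub_pos.2 hsz
  have hx0 : 0 ≤ x := hx ▸ le_max_right _ _
  have hxa : x ≤ a := hx ▸ max_le (by linarith) ha.le
  have hKsM : (Ks : ℝ) * M ≤ Kw * a :=
    mul_le_of_le_mul_div_add hKw' (Nat.cast_nonneg _) ha (sub_nonneg.2 hw1) (min_le_right _ _)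
      (hM1 ▸ hMle)
  set D := Kw * a + Ks * x
  have hD : 0 < D := by positivity
  set β := (Kw * a - Ks * M) / D
  have hβ : β ∈ Set.Icc 0 1 :=
    ⟨div_nonneg (by linarith) hD.le, (div_le_one hD).2 (by nlinarith)⟩
  have hf : (β * x + M) / Kw = R0 + a * M / D := by
    simp only [hR0, β, D]; field_simp; ring
  have hg : (β * x + (1 - β) * a + M) / K = R0 + a * M / D := by
    simp only [hR0, hK, β, D]; push_cast; field_simp; ring
  have hmono : MonotoneOn (fun β : ℝ => (β * x + M) / Kw) (Set.Icc 0 1) :=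
    fun b _ c _ hbc => by dsimp only; gcongr
  have hanti : AntitoneOn (fun β : ℝ => (β * x + (1 - β) * a + M) / K) (Set.Icc 0 1) :=
    fun b _ c _ hbc => div_le_div_of_nonneg_right
      (by nlinarith [mul_nonneg (sub_nonneg.2 hbc) (sub_nonneg.2 hxa)]) (Nat.cast_nonneg K)
  rw [(hmono.isGreatest_image_min hanti hβ (hf.trans hg.symm)).csSup_eq, hf]

/-- Converse computation for the global secrecy capacity–memory tradeoff with small
total cache budget when δ_z > δ_s (Proposition, eq. (60)). -/
theorem stmt_3 (Kw Ks K : ℕ) (hKw : 0 < Kw) (hKs : 0 < Ks) (hK : K = Kw + Ks)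
    (δs δw δz : ℝ) (hs0 : 0 ≤ δs) (hsw : δs ≤ δw) (hw1 : δw ≤ 1)
    (hsz : δs < δz) (hz1 : δz ≤ 1)
    (x R0 M1 : ℝ)
    (hx : x = max (δz - δw) 0)
    (hR0 : R0 = (δz - δs) * x / (Kw * (δz - δs) + Ks * x))
    (hM1 : M1 = (δz - δs) * min (1 - δz) (1 - δw) / (Ks * (1 - δw) + Kw * (δz - δs)))
    (M : ℝ) (hM0 : 0 ≤ M) (hMle : M ≤ Kw * M1) :
    sSup ((fun β : ℝ => min ((β * x + M) / Kw)
        ((β * x + (1 - β) * (δz - δs) + M) / K)) '' Set.Icc 0 1)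
      = R0 + (δz - δs) * M / (Kw * (δz - δs) + Ks * x) :=
  stmt_3_general Kw Ks K hKw hK δs δw δz hsw hw1 hsz x R0 M1 hx hR0 hM1 M hM0 hMle
end

section
/- Feasibility of the cache-aided superposition-jamming scheme: Let K_w, K_s be positive integers and δ_s, δ_w, δ_z reals with 0 ≤ δ_s ≤ δ_w < 1 and δ_s ≤ δ_z ≤ 1. Define γ := min{ K_w(δ_z − δ_s)/(K_s(1 − δ_w) + K_w(δ_w − δ_s)) , K_w(1 − δ_s)/(K_s(1 − δ_w) + K_w(1 − δ_s)) }, R := γ(1 − δ_w)/K_w, and R_bin := ((1 − δ_z) − γ(1 − δ_w))⁺. Then (i) γ ∈ [0,1]; (ii) R = min{ (1 − δ_w)(1 − δ_s)/(K_s(1 − δ_w) + K_w(1 − δ_s)) , (1 − δ_w)(δ_z − δ_s)/(K_s(1 − δ_w) + K_w(δ_w − δ_s)) } (the rate R² of the scheme); and (iii) R_bin + K_s·R ≤ (1 − γ)(1 − δ_s), i.e., the strong receivers can decode the satellite messages together with the random bin index. -/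
/-- Feasibility of the cache-aided superposition-jamming scheme. -/
theorem stmt_7 (Kw Ks : ℕ) (hKw : 0 < Kw) (hKs : 0 < Ks)
    (δs δw δz : ℝ) (hs0 : 0 ≤ δs) (hsw : δs ≤ δw) (hw1 : δw < 1)
    (hsz : δs ≤ δz) (hz1 : δz ≤ 1)
    (γ R Rbin : ℝ)
    (hγ : γ = min (Kw * (δz - δs) / (Ks * (1 - δw) + Kw * (δw - δs)))
              (Kw * (1 - δs) / (Ks * (1 - δw) + Kw * (1 - δs))))
    (hR : R = γ * (1 - δw) / Kw)
    (hRbin : Rbin = max ((1 - δz) - γ * (1 - δw)) 0) :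
    γ ∈ Set.Icc (0 : ℝ) 1
    ∧ R = min ((1 - δw) * (1 - δs) / (Ks * (1 - δw) + Kw * (1 - δs)))
            ((1 - δw) * (δz - δs) / (Ks * (1 - δw) + Kw * (δw - δs)))
    ∧ Rbin + Ks * R ≤ (1 - γ) * (1 - δs) := by
  have hKw' : (0:ℝ) < Kw := by exact_mod_cast hKw
  have hKs' : (0:ℝ) < Ks := by exact_mod_cast hKs
  have hw' : (0:ℝ) < 1 - δw := by linarith
  have hD1 : (0:ℝ) < Ks * (1 - δw) + Kw * (δw - δs) := by nlinarith
  have hD2 : (0:ℝ) < Ks * (1 - δw) + Kw * (1 - δs) := by nlinarith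
  have hγ0 : 0 ≤ γ := by
    rw [hγ]
    apply le_min
    · apply div_nonneg; nlinarith; linarith
    · apply div_nonneg; nlinarith; linarith
  have hγb1 : γ ≤ Kw * (δz - δs) / (Ks * (1 - δw) + Kw * (δw - δs)) := by
    rw [hγ]; exact min_le_left _ _
  have hγb2 : γ ≤ Kw * (1 - δs) / (Ks * (1 - δw) + Kw * (1 - δs)) := by
    rw [hγ]; exact min_le_right _ _
  have hγ1 : γ * (Ks * (1 - δw) + Kw * (δw - δs)) ≤ Kw * (δz - δs) :=
    (le_div_iff₀ hD1).mp hγb1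
  have hγ2 : γ * (Ks * (1 - δw) + Kw * (1 - δs)) ≤ Kw * (1 - δs) :=
    (le_div_iff₀ hD2).mp hγb2
  have hγle1 : γ ≤ 1 := by nlinarith
  refine ⟨⟨hγ0, hγle1⟩, ?_, ?_⟩
  · rw [hR, hγ, min_comm, div_eq_mul_inv,
      min_mul_of_nonneg _ _ hw'.le, min_mul_of_nonneg _ _ (inv_nonneg.mpr hKw'.le)]
    congr 1
    · field_simp
    · field_simp
  · rw [hRbin, hR, ← max_add_add_right]
    apply max_le
    · have h : Ks * (γ * (1 - δw) / Kw) * Kw = Ks * (γ * (1 - δw)) := by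
        field_simp
      nlinarith [mul_pos hKw' hw', sq_nonneg (1 - δz)]
    · have h : Ks * (γ * (1 - δw) / Kw) * Kw = Ks * (γ * (1 - δw)) := by
        field_simp
      nlinarith
end

section
/- Exact saturation of the strong receivers' decoding constraint in Subphase 2 of secure cache-aided piggyback coding I: let K_w, K_s be positive integers, t an integer with 1 ≤ t ≤ K_w − 1, and δ_s, δ_w, δ_z reals with 0 ≤ δ_s ≤ δ_w < 1 and δ_s < δ_z ≤ 1. Set m := min{δ_w − δ_s, δ_z − δ_s}, D' := (K_w − t + 1)(δ_z − δ_s)[K_s(t + 1)(1 − δ_w) + (K_w − t)·m] + K_s²·t(t + 1)(1 − δ_w)², β₂ := K_s(K_w − t + 1)(t + 1)(1 − δ_w)(δ_z − δ_s)/D', R_A := K_s·t(t + 1)(1 − δ_w)²(δ_z − δ_s)/D', and R_B := (K_w − t + 1)(t + 1)(1 − δ_w)(δ_z − δ_s)·m/D'. Then ((K_w − t + 1)/t)·R_A + K_s·R_B + β₂·min{(δ_w − δ_z)⁺, δ_w − δ_s} = β₂(1 − δ_s), where the last term on the left is the total wiretap-binning rate of the subphase. -/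
/-- Exact saturation of the strong receivers' decoding constraint in Subphase 2 of
secure cache-aided piggyback coding I. -/
theorem stmt_16 (Kw Ks : ℕ) (hKw : 0 < Kw) (hKs : 0 < Ks)
    (t : ℕ) (ht1 : 1 ≤ t) (ht2 : t ≤ Kw - 1)
    (δs δw δz : ℝ) (hs0 : 0 ≤ δs) (hsw : δs ≤ δw) (hw1 : δw < 1)
    (hsz : δs < δz) (hz1 : δz ≤ 1)
    (m D' β₂ RA RB : ℝ)
    (hm : m = min (δw - δs) (δz - δs))
    (hD' : D' = ((Kw : ℝ) - t + 1) * (δz - δs)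
            * ((Ks : ℝ) * (t + 1) * (1 - δw) + ((Kw : ℝ) - t) * m)
          + (Ks : ℝ)^2 * t * (t + 1) * (1 - δw)^2)
    (hβ₂ : β₂ = (Ks : ℝ) * ((Kw : ℝ) - t + 1) * (t + 1) * (1 - δw) * (δz - δs) / D')
    (hRA : RA = (Ks : ℝ) * t * (t + 1) * (1 - δw)^2 * (δz - δs) / D')
    (hRB : RB = ((Kw : ℝ) - t + 1) * (t + 1) * (1 - δw) * (δz - δs) * m / D') :
    (((Kw : ℝ) - t + 1) / t) * RA + Ks * RB
      + β₂ * min (max (δw - δz) 0) (δw - δs) = β₂ * (1 - δs) := by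
  have hKwt : t + 1 ≤ Kw := by omega
  have hKwt' : (t : ℝ) + 1 ≤ (Kw : ℝ) := by exact_mod_cast hKwt
  have ht0 : (1 : ℝ) ≤ (t : ℝ) := by exact_mod_cast ht1
  have hKs' : (1 : ℝ) ≤ (Ks : ℝ) := by exact_mod_cast hKs
  have hm0 : 0 ≤ m := by
    rw [hm]; exact le_min (by linarith) (by linarith)
  have hD'pos : 0 < D' := by
    rw [hD']
    have h1 : 0 < ((Kw : ℝ) - t + 1) * (δz - δs)
        * ((Ks : ℝ) * (t + 1) * (1 - δw) + ((Kw : ℝ) - t) * m) := by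
      apply mul_pos (mul_pos (by linarith) (by linarith))
      have h2 : 0 ≤ ((Kw : ℝ) - t) * m := mul_nonneg (by linarith) hm0
      have h3 : 0 < (Ks : ℝ) * ((t : ℝ) + 1) * (1 - δw) :=
        mul_pos (mul_pos (by linarith) (by linarith)) (by linarith)
      linarith
    have h4 : 0 ≤ (Ks : ℝ)^2 * t * (t + 1) * (1 - δw)^2 := by positivity
    linarith
  have hD0 : D' ≠ 0 := ne_of_gt hD'pos
  have ht0' : (t : ℝ) ≠ 0 := by linarith
  rcases le_total δw δz with h | h
  · have hm' : m = δw - δs := by rw [hm, min_eq_left (by linarith)]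
    have hmax : max (δw - δz) 0 = 0 := max_eq_right (by linarith)
    have hmin : min (max (δw - δz) 0) (δw - δs) = 0 := by
      rw [hmax, min_eq_left (by linarith)]
    rw [hmin, hβ₂, hRA, hRB, hm']
    field_simp
    ring
  · have hm' : m = δz - δs := by rw [hm, min_eq_right (by linarith)]
    have hmax : max (δw - δz) 0 = δw - δz := max_eq_left (by linarith)
    have hmin : min (max (δw - δz) 0) (δw - δs) = δw - δz := by
      rw [hmax, min_eq_left (by linarith)]
    rw [hmin, hβ₂, hRA, hRB, hm']
    field_simp
    ring
end

section
/- Feasibility and rate identities of secure cache-aided piggyback coding II (achieving (R^(K_w+2), M^(K_w+2)) of Theorem 3): let K_w, K_s be positive integers, D ≥ 0 a real (the library size), and δ_s, δ_w, δ_z reals with 0 ≤ δ_s ≤ δ_w ≤ 1 and δ_s < δ_z ≤ 1. Set a := δ_z − δ_s, m := min{1 − δ_z, 1 − δ_w}, denom := K_s·m + K_w·a, β := K_w·a/denom, R_A := a·m/denom, and R_B := K_w·a²/(K_s·denom). Then: (i) R_A + R_B = a/K_s; (ii) D·R_B + R_A = (D·K_w·a² + K_s·a·m)/(K_s·denom);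 (iii) K_w·R_A ≤ β(1 − δ_w); (iv) K_w·R_A + K_s·R_B ≤ β(1 − δ_s); and (v) K_s·R_A = (1 − β)·a. -/
/-!
Once β, R_A and R_B are substituted, (i), (ii) and (v) are rational identities in `a`, `m` and
`denom = K_s m + K_w a`, while the decoding loads of Subphase 1 factor as `K_w R_A = β m` and
`K_w R_A + K_s R_B = β (m + a)`. Since `β ≥ 0`, (iii) and (iv) thus reduce to `m ≤ 1 - δ_w` and
`m + a ≤ 1 - δ_z + (δ_z - δ_s) = 1 - δ_s`, both immediate from `m = min (1 - δ_z) (1 - δ_w)`.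
-/

section PiggybackRates

variable {Kw Ks a m d : ℝ}

theorem piggyback_rate_sum (hKs : Ks ≠ 0) (hd : d = Ks * m + Kw * a) (hd0 : d ≠ 0) :
    a * m / d + Kw * a ^ 2 / (Ks * d) = a / Ks := by
  rw [div_add_div _ _ hd0 (mul_ne_zero hKs hd0), div_eq_div_iff (by positivity) hKs, hd]
  ring

theorem piggyback_cache_size (hKs : Ks ≠ 0) (hd0 : d ≠ 0) (D : ℝ) :
    D * (Kw * a ^ 2 / (Ks * d)) + a * m / d = (D * Kw * a ^ 2 + Ks * a * m) / (Ks * d) := by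
  field_simp

theorem piggyback_total_load (hKs : Ks ≠ 0) :
    Kw * (a * m / d) + Ks * (Kw * a ^ 2 / (Ks * d)) = Kw * a / d * (m + a) := by
  rw [mul_div_assoc' Ks, mul_div_mul_left _ _ hKs]
  ring

theorem piggyback_strong_load (hd : d = Ks * m + Kw * a) (hd0 : d ≠ 0) :
    Ks * (a * m / d) = (1 - Kw * a / d) * a := by
  rw [one_sub_div hd0, hd]
  ring

end PiggybackRates

theorem stmt_19_general (Kw Ks : ℕ) (hKw : 0 < Kw) (hKs : 0 < Ks)
    (D : ℝ)
    (δs δw δz : ℝ) (hw1 : δw ≤ 1)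
    (hsz : δs < δz) (hz1 : δz ≤ 1)
    (a m denom β RA RB : ℝ)
    (ha : a = δz - δs)
    (hm : m = min (1 - δz) (1 - δw))
    (hdenom : denom = Ks * m + Kw * a)
    (hβ : β = Kw * a / denom)
    (hRA : RA = a * m / denom)
    (hRB : RB = Kw * a^2 / (Ks * denom)) :
    RA + RB = a / Ks
    ∧ D * RB + RA = (D * Kw * a^2 + Ks * a * m) / (Ks * denom)
    ∧ (Kw : ℝ) * RA ≤ β * (1 - δw)
    ∧ (Kw : ℝ) * RA + Ks * RB ≤ β * (1 - δs)
    ∧ (Ks : ℝ) * RA = (1 - β) * a := by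
  subst hβ hRA hRB
  have ha0 : 0 < a := by linarith
  have hm0 : 0 ≤ m := hm ▸ le_min (by linarith) (by linarith)
  have hdenom0 : 0 < denom := hdenom ▸ by positivity
  have hβ0 : 0 ≤ (Kw : ℝ) * a / denom := by positivity
  have hKs0 : (Ks : ℝ) ≠ 0 := by positivity
  have hmw : m ≤ 1 - δw := hm ▸ min_le_right _ _
  have hma : m + a ≤ 1 - δs := by linarith [hm ▸ min_le_left (1 - δz) (1 - δw)]
  refine ⟨piggyback_rate_sum hKs0 hdenom hdenom0.ne',
    piggyback_cache_size hKs0 hdenom0.ne' D, ?_, ?_, piggyback_strong_load hdenom hdenom0.ne'⟩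
  · calc (Kw : ℝ) * (a * m / denom) = Kw * a / denom * m := by ring
      _ ≤ Kw * a / denom * (1 - δw) := mul_le_mul_of_nonneg_left hmw hβ0
  · rw [piggyback_total_load hKs0]
    exact mul_le_mul_of_nonneg_left hma hβ0

/-- Feasibility and rate identities of secure cache-aided piggyback coding II,
achieving (R^(K_w+2), M^(K_w+2)) of Theorem 3. -/
theorem stmt_19 (Kw Ks : ℕ) (hKw : 0 < Kw) (hKs : 0 < Ks)
    (D : ℝ) (hD : 0 ≤ D)
    (δs δw δz : ℝ) (hs0 : 0 ≤ δs) (hsw : δs ≤ δw) (hw1 : δw ≤ 1)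
    (hsz : δs < δz) (hz1 : δz ≤ 1)
    (a m denom β RA RB : ℝ)
    (ha : a = δz - δs)
    (hm : m = min (1 - δz) (1 - δw))
    (hdenom : denom = Ks * m + Kw * a)
    (hβ : β = Kw * a / denom)
    (hRA : RA = a * m / denom)
    (hRB : RB = Kw * a^2 / (Ks * denom)) :
    RA + RB = a / Ks
    ∧ D * RB + RA = (D * Kw * a^2 + Ks * a * m) / (Ks * denom)
    ∧ (Kw : ℝ) * RA ≤ β * (1 - δw)
    ∧ (Kw : ℝ) * RA + Ks * RB ≤ β * (1 - δs)
    ∧ (Ks : ℝ) * RA = (1 - β) * a :=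
  stmt_19_general Kw Ks hKw hKs D δs δw δz hw1 hsz hz1 a m denom β RA RB ha hm hdenom hβ hRA hRB
end
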